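/- (Corollary 1: instability of long converter chains.) Fix reals D ∈ (0,1], L > 0, C > 0, P > 0, V̄ > 0 and a feedback gain f = (f₁, f₂) ∈ ℝ² such that the standalone closed-loop matrix M = [[V̄·f₁/L, −1/L + V̄·f₂/L], [1/C, P/(C·V̄²)]] is Hurwitz. For n ≥ 1 and R > 0 define the real 2n×2n matrix Ã_n(R) for the line network of n identical converters, with state (i₁, v₁, …, i_n, v_n), given entrywise by: the (2k−1)-th row has entry −(D·R/L)·min(k, m) in column 2m−1 for every m = 1,…,n, plus V̄·f₁/L added at column 2k−1 and the entry −1/L + V̄·f₂/L at column 2k, and zeros in all other columns; the (2k)-th row has entry 1/C at column 2k−1, entry P/(C·V̄²) at column 2k, and zeros elsewhere. Then for every R > 0 there exists N₀ such that for all n > N₀ the matrix Ã_n(R) is not Hurwitz, i.e., it has a complex eigenvalue with nonnegative real part. -/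

import Mathlib

/-!
Interleaving the coordinates as `(converter, current/voltage)` turns `Ã_n(R)` into
`1 ⊗ M - (D R / L) • (K_n ⊗ E₀₀)`, where `M` is the closed-loop matrix of a single converter,
`K_n = (min (k, m))` and `E₀₀` is the matrix unit. If `K_n v = μ v` and
`(M - (D R / L) μ E₀₀) w = t w`, then `v ⊗ w` is an eigenvector of `Ã_n(R)` for `t`.
The symmetric matrix `K_n` has trace `n (n + 1) / 2`, hence an eigenvalue `μ ≥ (n + 1) / 2`.
For large `n` the `2 × 2` matrix `M - (D R / L) μ E₀₀` then has determinant
`det M - (D R / L) μ P / (C V̄²) < 0`, so it has a positive real eigenvalue.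
-/

/-- A real square matrix is Hurwitz if every complex eigenvalue has strictly
negative real part. -/
def Matrix.IsHurwitz {n : Type*} [Fintype n] [DecidableEq n]
    (M : Matrix n n ℝ) : Prop :=
  ∀ μ ∈ spectrum ℂ (M.map Complex.ofReal), μ.re < 0

/-- The closed-loop matrix `Ã_n(R)` of a line network of `n` identical buck
converters with constant power loads, each using the same individual state
feedback `f = (f₁, f₂)`, in the state order `(i₁, v₁, …, i_n, v_n)`
(0-indexed: row `2(k−1)` is the inductor-current row of converter `k`, row
`2k−1` is its capacitor-voltage row). The current row of converter `k` has
entry `−(D·R/L)·min(k, m)` in the current column of every converter `m`, plus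
`V̄·f₁/L` on its own current column and `−1/L + V̄·f₂/L` on its own voltage
column; the voltage row of converter `k` has entries `1/C` and `P/(C·V̄²)` on
converter `k`'s current and voltage columns respectively. -/
noncomputable def chainMatrix (D L C P Vbar f₁ f₂ : ℝ) (n : ℕ) (R : ℝ) :
    Matrix (Fin (2 * n)) (Fin (2 * n)) ℝ :=
  Matrix.of fun r c =>
    if r.val % 2 = 0 then
      -- inductor-current row of converter k = r/2 + 1
      if c.val % 2 = 0 then
        -(D * R / L) * ((min (r.val / 2 + 1) (c.val / 2 + 1) : ℕ) : ℝ)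
          + (if c.val = r.val then Vbar * f₁ / L else 0)
      else if c.val = r.val + 1 then -(1 / L) + Vbar * f₂ / L
      else 0
    else
      -- capacitor-voltage row of converter k = (r+1)/2
      if c.val + 1 = r.val then 1 / C
      else if c.val = r.val then P / (C * Vbar ^ 2)
      else 0

open Matrix
open scoped Kronecker

theorem exists_pos_sq_sub_mul_add_eq_zero_of_neg (b c : ℝ) (hc : c < 0) :
    ∃ x, 0 < x ∧ x ^ 2 - b * x + c = 0 := by
  have hs : √(b ^ 2 - 4 * c) ^ 2 = b ^ 2 - 4 * c := Real.sq_sqrt (by nlinarith)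
  have hb : |b| < √(b ^ 2 - 4 * c) := by
    rw [← Real.sqrt_sq_eq_abs]
    exact Real.sqrt_lt_sqrt (sq_nonneg b) (by linarith)
  exact ⟨(b + √(b ^ 2 - 4 * c)) / 2, by linarith [neg_abs_le b], by linear_combination hs / 4⟩

theorem Pi.mul_fst_snd_ne_zero {ι κ R : Type*} [MulZeroClass R] [NoZeroDivisors R]
    {v : ι → R} {w : κ → R} (hv : v ≠ 0) (hw : w ≠ 0) : (fun x : ι × κ => v x.1 * w x.2) ≠ 0 := by
  obtain ⟨i, hi⟩ := Function.ne_iff.1 hv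
  obtain ⟨j, hj⟩ := Function.ne_iff.1 hw
  exact Function.ne_iff.2 ⟨(i, j), mul_ne_zero hi hj⟩

namespace Matrix

section Spectrum

variable {ι : Type*} [Fintype ι] [DecidableEq ι]

theorem mem_spectrum_of_mulVec_eq_smul {K : Type*} [Field K] {A : Matrix ι ι K} {v : ι → K}
    {t : K} (hv : v ≠ 0) (h : A *ᵥ v = t • v) : t ∈ spectrum K A := by
  rw [← spectrum_toLin', ← Module.End.hasEigenvalue_iff_mem_spectrum]
  exact Module.End.hasEigenvalue_of_hasEigenvector
    ⟨Module.End.mem_eigenspace_iff.2 (by simpa using h), hv⟩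

theorem exists_mulVec_eq_smul_of_mem_spectrum {K : Type*} [Field K] {A : Matrix ι ι K} {t : K}
    (h : t ∈ spectrum K A) : ∃ v ≠ 0, A *ᵥ v = t • v := by
  rw [← spectrum_toLin', ← Module.End.hasEigenvalue_iff_mem_spectrum] at h
  obtain ⟨v, hv, hne⟩ := h.exists_hasEigenvector
  exact ⟨v, hne, by simpa using Module.End.mem_eigenspace_iff.1 hv⟩

theorem ofReal_mem_spectrum_map {A : Matrix ι ι ℝ} {t : ℝ} (h : t ∈ spectrum ℝ A) :
    (t : ℂ) ∈ spectrum ℂ (A.map Complex.ofReal) := by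
  rw [mem_spectrum_iff_isRoot_charpoly] at h ⊢
  exact charpoly_map A Complex.ofRealHom ▸ h.map

theorem IsHermitian.exists_trace_div_card_le_eigenvalue [Nonempty ι] {A : Matrix ι ι ℝ}
    (hA : A.IsHermitian) : ∃ i, A.trace / Fintype.card ι ≤ hA.eigenvalues i := by
  obtain ⟨i, -, hi⟩ := Finset.exists_le_of_sum_le (s := Finset.univ) Finset.univ_nonempty
    (f := fun _ => A.trace / Fintype.card ι) (g := hA.eigenvalues) (by
      rw [Finset.sum_const, Finset.card_univ, nsmul_eq_mul, mul_div_cancel₀ _ (by positivity),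
        hA.trace_eq_sum_eigenvalues]
      rfl)
  exact ⟨i, hi⟩

theorem exists_pos_mem_spectrum_of_det_neg {A : Matrix (Fin 2) (Fin 2) ℝ} (h : A.det < 0) :
    ∃ t, 0 < t ∧ t ∈ spectrum ℝ A := by
  obtain ⟨t, ht, hroot⟩ := exists_pos_sq_sub_mul_add_eq_zero_of_neg A.trace A.det h
  refine ⟨t, ht, ?_⟩
  rw [spectrum.mem_iff, isUnit_iff_isUnit_det, isUnit_iff_ne_zero, not_not, det_fin_two]
  simp only [trace_fin_two, det_fin_two, algebraMap_eq_diagonal, sub_apply, diagonal_apply_eq,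
    diagonal_apply_ne, Pi.algebraMap_apply, Algebra.algebraMap_self, RingHom.id_apply, ne_eq,
    zero_ne_one, one_ne_zero, not_false_eq_true, zero_sub, mul_neg, neg_mul, neg_neg] at hroot ⊢
  linear_combination hroot

end Spectrum

theorem det_sub_smul_single_zero_zero {R : Type*} [CommRing R] (A : Matrix (Fin 2) (Fin 2) R)
    (c : R) : (A - c • single 0 0 1).det = A.det - c * A 1 1 := by
  simp only [smul_single, smul_eq_mul, mul_one, det_fin_two, sub_apply, single_apply_same,
    single_apply_of_ne, zero_ne_one, not_false_eq_true, and_self, and_true,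
    and_false, sub_zero]
  ring

theorem kronecker_mulVec_mul {ι κ ι' κ' R : Type*} [Fintype ι'] [Fintype κ'] [CommSemiring R]
    (A : Matrix ι ι' R) (B : Matrix κ κ' R) (v : ι' → R) (w : κ' → R) :
    (A ⊗ₖ B) *ᵥ (fun x => v x.1 * w x.2) = fun x => (A *ᵥ v) x.1 * (B *ᵥ w) x.2 := by
  ext ⟨i, j⟩
  simp only [mulVec, dotProduct, kroneckerMap_apply, Fintype.sum_prod_type, Finset.sum_mul_sum]
  exact Finset.sum_congr rfl fun _ _ => Finset.sum_congr rfl fun _ _ => mul_mul_mul_comm ..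

theorem one_kronecker_sub_smul_kronecker_mulVec {ι κ R : Type*} [Fintype ι] [DecidableEq ι]
    [Fintype κ] [CommRing R] {M E : Matrix κ κ R} {K : Matrix ι ι R} {v : ι → R} {w : κ → R}
    {d μ t : R} (hv : K *ᵥ v = μ • v) (hw : (M - (d * μ) • E) *ᵥ w = t • w) :
    (1 ⊗ₖ M - d • (K ⊗ₖ E)) *ᵥ (fun x => v x.1 * w x.2) = t • fun x => v x.1 * w x.2 := by
  rw [sub_mulVec, smul_mulVec, kronecker_mulVec_mul, kronecker_mulVec_mul, one_mulVec, hv]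
  rw [sub_mulVec, smul_mulVec] at hw
  ext x
  have hwx := congrFun hw x.2
  simp only [Pi.sub_apply, Pi.smul_apply, smul_eq_mul] at hwx ⊢
  linear_combination v x.1 * hwx

end Matrix

def minMatrix (n : ℕ) : Matrix (Fin n) (Fin n) ℝ :=
  of fun k m => (min (k.val + 1) (m.val + 1) : ℕ)

theorem isHermitian_minMatrix (n : ℕ) : (minMatrix n).IsHermitian := by
  ext k m
  simp [minMatrix, min_comm]

theorem trace_minMatrix (n : ℕ) : (minMatrix n).trace = n * (n + 1) / 2 := by
  have gauss : ∀ N : ℕ, ∑ k ∈ Finset.range N, ((k : ℝ) + 1) = N * (N + 1) / 2 := by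
    intro N
    induction N with
    | zero => simp
    | succ N ih => rw [Finset.sum_range_succ, ih]; push_cast; ring
  simp [trace, minMatrix, Fin.sum_univ_eq_sum_range (fun k => (k : ℝ) + 1), gauss]

theorem exists_mulVec_minMatrix_eq_smul (n : ℕ) (hn : 0 < n) :
    ∃ μ : ℝ, (n + 1) / 2 ≤ μ ∧ ∃ v ≠ 0, minMatrix n *ᵥ v = μ • v := by
  have : Nonempty (Fin n) := ⟨⟨0, hn⟩⟩
  have hA := isHermitian_minMatrix n
  obtain ⟨i, hi⟩ := hA.exists_trace_div_card_le_eigenvalue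
  refine ⟨_, ?_, _, ?_, hA.mulVec_eigenvectorBasis i⟩
  · have hn' : (n : ℝ) ≠ 0 := by positivity
    rwa [trace_minMatrix, Fintype.card_fin, div_right_comm, mul_div_cancel_left₀ _ hn'] at hi
  · exact fun h => hA.eigenvectorBasis.orthonormal.ne_zero i (by ext j; exact congrFun h j)

noncomputable def converterMatrix (L C P Vbar f₁ f₂ : ℝ) : Matrix (Fin 2) (Fin 2) ℝ :=
  !![Vbar * f₁ / L, -(1 / L) + Vbar * f₂ / L; 1 / C, P / (C * Vbar ^ 2)]

/-- `(k, j) ↦ 2 k + j`: coordinate `j = 0` is the current and `j = 1` the voltage of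
converter `k`. -/
def chainIndex (n : ℕ) : Fin n × Fin 2 ≃ Fin (2 * n) :=
  finProdFinEquiv.trans (finCongr (Nat.mul_comm n 2))

theorem reindex_chainMatrix (D L C P Vbar f₁ f₂ : ℝ) (n : ℕ) (R : ℝ) :
    reindex (chainIndex n).symm (chainIndex n).symm (chainMatrix D L C P Vbar f₁ f₂ n R) =
      1 ⊗ₖ converterMatrix L C P Vbar f₁ f₂ - (D * R / L) • (minMatrix n ⊗ₖ single 0 0 1) := by
  ext ⟨k, i⟩ ⟨m, j⟩
  fin_cases i <;> fin_cases j <;>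
    simp [chainMatrix, chainIndex, minMatrix, converterMatrix, one_apply, Fin.ext_iff] <;>
    split_ifs <;> first | (exfalso; omega) | ring

theorem mem_spectrum_chainMatrix {D L C P Vbar f₁ f₂ R μ t : ℝ} {n : ℕ} {v : Fin n → ℝ}
    (hv0 : v ≠ 0) (hv : minMatrix n *ᵥ v = μ • v)
    (ht : t ∈ spectrum ℝ (converterMatrix L C P Vbar f₁ f₂ - (D * R / L * μ) • single 0 0 1)) :
    t ∈ spectrum ℝ (chainMatrix D L C P Vbar f₁ f₂ n R) := by
  obtain ⟨w, hw0, hw⟩ := exists_mulVec_eq_smul_of_mem_spectrum ht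
  rw [← AlgEquiv.spectrum_eq (reindexAlgEquiv ℝ ℝ (chainIndex n).symm), coe_reindexAlgEquiv,
    reindex_chainMatrix]
  exact mem_spectrum_of_mulVec_eq_smul (Pi.mul_fst_snd_ne_zero hv0 hw0)
    (one_kronecker_sub_smul_kronecker_mulVec hv hw)

theorem long_converter_chain_unstable_general
    (D L C P Vbar f₁ f₂ : ℝ) (hD : 0 < D ∧ D ≤ 1) (hL : 0 < L) (hC : 0 < C)
    (hP : 0 < P) (hV : 0 < Vbar) :
    ∀ R > (0 : ℝ), ∃ N₀ : ℕ, ∀ n > N₀,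
      ¬ (chainMatrix D L C P Vbar f₁ f₂ n R).IsHurwitz ∧
        ∃ μ ∈ spectrum ℂ ((chainMatrix D L C P Vbar f₁ f₂ n R).map
          Complex.ofReal), 0 ≤ μ.re := by
  intro R hR
  set M := converterMatrix L C P Vbar f₁ f₂
  have hM : M 1 1 = P / (C * Vbar ^ 2) := rfl
  have hdp : 0 < D * R / L * M 1 1 := by
    have := hD.1
    rw [hM]
    positivity
  obtain ⟨N₀, hN₀⟩ := exists_nat_gt (2 * M.det / (D * R / L * M 1 1))
  refine ⟨N₀, fun n hn => ?_⟩
  obtain ⟨μ, hμ, v, hv0, hv⟩ := exists_mulVec_minMatrix_eq_smul n (by omega)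
  have hdet : (M - (D * R / L * μ) • single 0 0 1).det < 0 := by
    have hn' : (N₀ : ℝ) + 1 ≤ n := by exact_mod_cast hn
    rw [div_lt_iff₀ hdp] at hN₀
    rw [det_sub_smul_single_zero_zero]
    nlinarith
  obtain ⟨t, ht, htM⟩ := exists_pos_mem_spectrum_of_det_neg hdet
  have hmem := ofReal_mem_spectrum_map (mem_spectrum_chainMatrix hv0 hv htM)
  exact ⟨fun h => (h _ hmem).not_ge (by simpa using ht.le), _, hmem, by simpa using ht.le⟩

/-- Corollary 1 (instability of long converter chains): for any fixed
individually stabilizing feedback gain and any line resistance `R > 0`, all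
sufficiently long chains of identical converters are not Hurwitz. -/
theorem long_converter_chain_unstable
    (D L C P Vbar f₁ f₂ : ℝ) (hD : 0 < D ∧ D ≤ 1) (hL : 0 < L) (hC : 0 < C)
    (hP : 0 < P) (hV : 0 < Vbar)
    (hstable : Matrix.IsHurwitz
      !![Vbar * f₁ / L, -(1 / L) + Vbar * f₂ / L;
         1 / C, P / (C * Vbar ^ 2)]) :
    ∀ R > (0 : ℝ), ∃ N₀ : ℕ, ∀ n > N₀,
      ¬ (chainMatrix D L C P Vbar f₁ f₂ n R).IsHurwitz ∧
        ∃ μ ∈ spectrum ℂ ((chainMatrix D L C P Vbar f₁ f₂ n R).map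
          Complex.ofReal), 0 ≤ μ.re :=
  long_converter_chain_unstable_general D L C P Vbar f₁ f₂ hD hL hC hP hV
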